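/- Every Cayley-Dickson loop Q_n is Hamiltonian: every subloop S of Q_n is normal, i.e., for all x, y ∈ Q_n and s ∈ S: xS = Sx, (xS)y = x(Sy), and x(yS) = (xy)S. -/

import Mathlib

/-- The underlying set of the Cayley-Dickson loop `Q n`:
`Q 0 = {±1}` (encoded as `Bool`, `false = 1`, `true = -1`) and `Q (n+1) = Q n × Bool`,
an element `(x, b)` encoding `(x, 0)` if `b = false` and `(x, 1)` if `b = true`. -/
def Q : ℕ → Type
  | 0 => Bool
  | n+1 => Q n × Bool

namespace Q

def one : ∀ n, Q n
  | 0 => false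
  | n+1 => (one n, false)

def neg : ∀ n, Q n → Q n
  | 0, x => !x
  | n+1, (x, b) => (neg n x, b)

def conj : ∀ n, Q n → Q n
  | 0, x => x
  | n+1, (x, false) => (conj n x, false)
  | n+1, (x, true) => (neg n x, true)

/-- Cayley-Dickson doubling multiplication restricted to the loop:
`(x,0)(y,0) = (xy,0)`, `(x,0)(y,1) = (yx,1)`, `(x,1)(y,0) = (xy*,1)`, `(x,1)(y,1) = (-y*x,0)`. -/
def mul : ∀ n, Q n → Q n → Q n
  | 0, x, y => xor x y
  | n+1, (x, false), (y, false) => (mul n x y, false)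
  | n+1, (x, false), (y, true)  => (mul n y x, true)
  | n+1, (x, true),  (y, false) => (mul n x (conj n y), true)
  | n+1, (x, true),  (y, true)  => (neg n (mul n (conj n y) x), false)

instance (n : ℕ) : One (Q n) := ⟨one n⟩
instance (n : ℕ) : Neg (Q n) := ⟨neg n⟩
instance (n : ℕ) : Mul (Q n) := ⟨mul n⟩
instance (n : ℕ) : Star (Q n) := ⟨conj n⟩
/-- In `Q n` the inverse of `x` is its conjugate `x*`. -/
instance (n : ℕ) : Inv (Q n) := ⟨conj n⟩

instance instDecEq : ∀ n, DecidableEq (Q n)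
  | 0 => inferInstanceAs (DecidableEq Bool)
  | n+1 => letI := instDecEq n; inferInstanceAs (DecidableEq (Q n × Bool))

instance instFintype : ∀ n, Fintype (Q n)
  | 0 => inferInstanceAs (Fintype Bool)
  | n+1 => letI := instFintype n; inferInstanceAs (Fintype (Q n × Bool))

/-- Powers in `Q n` (well defined by diassociativity). -/
def pow {n : ℕ} (x : Q n) : ℕ → Q n
  | 0 => 1
  | k+1 => x * pow x k

/-- The embedding `x ↦ (x, 0)` of `Q n` into `Q (n+1)`. -/
def up {n : ℕ} (x : Q n) : Q (n+1) := (x, false)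

/-- The map `x ↦ (x, 1)` from `Q n` into `Q (n+1)`. -/
def up1 {n : ℕ} (x : Q n) : Q (n+1) := (x, true)

/-- The commutator `[x,y]`, defined by `xy = (yx)[x,y]`. -/
def comm {n : ℕ} (x y : Q n) : Q n := (y * x)⁻¹ * (x * y)

/-- The associator `[x,y,z]`, defined by `(xy)z = (x(yz))[x,y,z]`. -/
def assoc {n : ℕ} (x y z : Q n) : Q n := (x * (y * z))⁻¹ * ((x * y) * z)

/-- A subloop of the Cayley-Dickson loop `Q n`: a subset containing `1` and closed
under multiplication and inverses (= conjugates). -/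
structure Subloop (n : ℕ) where
  carrier : Set (Q n)
  one_mem : (1 : Q n) ∈ carrier
  mul_mem : ∀ ⦃x y : Q n⦄, x ∈ carrier → y ∈ carrier → x * y ∈ carrier
  inv_mem : ∀ ⦃x : Q n⦄, x ∈ carrier → x⁻¹ ∈ carrier

/-- The subloop of `Q n` generated by a set `s`. -/
def closure (n : ℕ) (s : Set (Q n)) : Set (Q n) :=
  ⋂₀ {t : Set (Q n) | s ⊆ t ∧ (1 : Q n) ∈ t ∧
      (∀ x ∈ t, ∀ y ∈ t, x * y ∈ t) ∧ (∀ x ∈ t, x⁻¹ ∈ t)}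

end Q

/-! Up to sign, every element of `Q n` is a basis vector `e_i` of the Cayley-Dickson algebra,
indexed by `i ∈ (ℤ/2)ⁿ`, and `e_i e_j = ±e_{i+j}`: the map `Q.index` is multiplicative and
its fibres are the pairs `{x, -x}`. Since `(ℤ/2)ⁿ` is an abelian group, commutators and
associators are `±1`. A subloop containing `s ≠ 1` also contains `-s` (as `s² = -1` unless
`s = ±1`), so correcting a product by the sign of a commutator or associator never leaves
the subloop. -/

theorem eq_or_eq_neg_comm {α : Type*} [InvolutiveNeg α] {a b : α} :
    a = b ∨ a = -b ↔ b = a ∨ b = -a :=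
  or_congr eq_comm (neg_eq_iff_eq_neg.symm.trans eq_comm)

namespace Q

variable {n : ℕ}

@[elab_as_elim]
theorem cases_up_up1 {motive : Q (n + 1) → Prop} (up : ∀ x, motive (up x))
    (up1 : ∀ x, motive (up1 x)) (z : Q (n + 1)) : motive z := by
  obtain ⟨x, _ | _⟩ := z
  exacts [up x, up1 x]

theorem one_succ : (1 : Q (n + 1)) = up 1 := rfl

@[simp] theorem neg_up (x : Q n) : -up x = up (-x) := rfl
@[simp] theorem neg_up1 (x : Q n) : -up1 x = up1 (-x) := rfl
@[simp] theorem star_up (x : Q n) : star (up x) = up (star x) := rfl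
@[simp] theorem star_up1 (x : Q n) : star (up1 x) = up1 (-x) := rfl
@[simp] theorem up_mul_up (x y : Q n) : up x * up y = up (x * y) := rfl
@[simp] theorem up_mul_up1 (x y : Q n) : up x * up1 y = up1 (y * x) := rfl
@[simp] theorem up1_mul_up (x y : Q n) : up1 x * up y = up1 (x * star y) := rfl
@[simp] theorem up1_mul_up1 (x y : Q n) : up1 x * up1 y = up (-(star y * x)) := rfl

@[simp] theorem up_inj {x y : Q n} : up x = up y ↔ x = y :=
  ⟨congrArg Prod.fst, congrArg up⟩

@[simp] theorem up1_inj {x y : Q n} : up1 x = up1 y ↔ x = y :=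
  ⟨congrArg Prod.fst, congrArg up1⟩

protected theorem neg_neg : ∀ {n} (x : Q n), - -x = x
  | 0, x => Bool.not_not x
  | _ + 1, x => by induction x using cases_up_up1 <;> simp [Q.neg_neg]

instance : InvolutiveNeg (Q n) where
  neg_neg := Q.neg_neg

theorem star_one : ∀ {n}, star (1 : Q n) = 1
  | 0 => rfl
  | _ + 1 => by simp [one_succ, star_one]

protected theorem mul_one : ∀ {n} (x : Q n), x * 1 = x
  | 0, x => Bool.xor_false x
  | _ + 1, x => by induction x using cases_up_up1 <;> simp [one_succ, Q.mul_one, star_one]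

protected theorem one_mul : ∀ {n} (x : Q n), 1 * x = x
  | 0, x => Bool.false_xor x
  | _ + 1, x => by induction x using cases_up_up1 <;> simp [one_succ, Q.one_mul, Q.mul_one]

instance : MulOneClass (Q n) where
  one_mul := Q.one_mul
  mul_one := Q.mul_one

theorem star_neg : ∀ {n} (x : Q n), star (-x) = -star x
  | 0, _ => rfl
  | _ + 1, x => by induction x using cases_up_up1 <;> simp [star_neg]

protected theorem neg_mul_and_mul_neg : ∀ {n} (x y : Q n), -x * y = -(x * y) ∧ x * -y = -(x * y)
  | 0, x, y => by cases x <;> cases y <;> decide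
  | _ + 1, x, y => by
    induction x using cases_up_up1 <;> induction y using cases_up_up1 <;>
      simp [star_neg, Q.neg_mul_and_mul_neg]

instance : HasDistribNeg (Q n) where
  neg_mul x y := (Q.neg_mul_and_mul_neg x y).1
  mul_neg x y := (Q.neg_mul_and_mul_neg x y).2

theorem star_mul_self : ∀ {n} (x : Q n), star x * x = 1
  | 0, x => Bool.xor_self x
  | _ + 1, x => by induction x using cases_up_up1 <;> simp [one_succ, star_mul_self]

theorem eq_one_or_eq_neg_one_or_mul_self_eq_neg_one :
    ∀ {n} (x : Q n), x = 1 ∨ x = -1 ∨ x * x = -1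
  | 0, x => by cases x; exacts [Or.inl rfl, Or.inr (Or.inl rfl)]
  | _ + 1, x => by
    induction x using cases_up_up1 with
    | up x =>
      rcases eq_one_or_eq_neg_one_or_mul_self_eq_neg_one x with h | h | h <;> simp [one_succ, h]
    | up1 x => simp [one_succ, star_mul_self]

def index : ∀ {n}, Q n → (Fin n → ZMod 2)
  | 0, _ => 0
  | _ + 1, (x, false) => Matrix.vecCons 0 (index x)
  | _ + 1, (x, true) => Matrix.vecCons 1 (index x)

@[simp] theorem index_up (x : Q n) : index (up x) = Matrix.vecCons 0 (index x) := rfl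
@[simp] theorem index_up1 (x : Q n) : index (up1 x) = Matrix.vecCons 1 (index x) := rfl

@[simp] theorem index_neg : ∀ {n} (x : Q n), index (-x) = index x
  | 0, _ => rfl
  | _ + 1, x => by induction x using cases_up_up1 <;> simp [index_neg]

@[simp] theorem index_star : ∀ {n} (x : Q n), index (star x) = index x
  | 0, _ => rfl
  | _ + 1, x => by induction x using cases_up_up1 <;> simp [index_star]

theorem index_mul : ∀ {n} (x y : Q n), index (x * y) = index x + index y
  | 0, _, _ => Subsingleton.elim _ _
  | _ + 1, x, y => by
    induction x using cases_up_up1 <;> induction y using cases_up_up1 <;>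
      simp [index_mul, add_comm, CharTwo.add_self_eq_zero]

theorem eq_or_eq_neg_of_index_eq : ∀ {n} {x y : Q n}, index x = index y → x = y ∨ x = -y
  | 0, x, y, _ => by cases x <;> cases y <;> first | exact Or.inl rfl | exact Or.inr rfl
  | _ + 1, x, y, h => by
    induction x using cases_up_up1 <;> induction y using cases_up_up1 <;>
      simp_all [eq_or_eq_neg_of_index_eq]

theorem mul_comm_eq_or_eq_neg (x y : Q n) : x * y = y * x ∨ x * y = -(y * x) :=
  eq_or_eq_neg_of_index_eq (by simp only [index_mul, add_comm])

theorem mul_assoc_eq_or_eq_neg (x y z : Q n) :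
    x * y * z = x * (y * z) ∨ x * y * z = -(x * (y * z)) :=
  eq_or_eq_neg_of_index_eq (by simp only [index_mul, add_assoc])

namespace Subloop

variable (S : Subloop n)

theorem neg_mem_or_eq_one {s : Q n} (hs : s ∈ S.carrier) : -s ∈ S.carrier ∨ s = 1 := by
  rcases eq_one_or_eq_neg_one_or_mul_self_eq_neg_one s with h | rfl | h
  · exact Or.inr h
  · exact Or.inl (by simpa using S.one_mem)
  · left
    have : s * s * s = -s := by rw [h, neg_mul, one_mul]
    exact this ▸ S.mul_mem (S.mul_mem hs hs) hs

theorem image_subset_image_of_eq_or_eq_neg {f g : Q n → Q n} (hg : ∀ s, g (-s) = -g s)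
    (h1 : f 1 = g 1) (hfg : ∀ s, f s = g s ∨ f s = -g s) :
    f '' S.carrier ⊆ g '' S.carrier := by
  rintro _ ⟨s, hs, rfl⟩
  rcases hfg s with h | h
  · exact ⟨s, hs, h.symm⟩
  · rcases S.neg_mem_or_eq_one hs with hs' | rfl
    · exact ⟨-s, hs', by rw [h, hg]⟩
    · exact ⟨1, hs, h1.symm⟩

theorem image_eq_image_of_eq_or_eq_neg {f g : Q n → Q n} (hf : ∀ s, f (-s) = -f s)
    (hg : ∀ s, g (-s) = -g s) (h1 : f 1 = g 1) (hfg : ∀ s, f s = g s ∨ f s = -g s) :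
    f '' S.carrier = g '' S.carrier :=
  (S.image_subset_image_of_eq_or_eq_neg hg h1 hfg).antisymm
    (S.image_subset_image_of_eq_or_eq_neg hf h1.symm fun s => eq_or_eq_neg_comm.mp (hfg s))

end Subloop

end Q

/-- Every Cayley-Dickson loop `Q n` is Hamiltonian: every subloop `S` is normal,
i.e. `xS = Sx`, `(xS)y = x(Sy)` and `x(yS) = (xy)S` for all `x, y ∈ Q n`. -/
theorem Q.hamiltonian (n : ℕ) (S : Q.Subloop n) (x y : Q n) :
    (fun s => x * s) '' S.carrier = (fun s => s * x) '' S.carrier ∧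
    (fun s => (x * s) * y) '' S.carrier = (fun s => x * (s * y)) '' S.carrier ∧
    (fun s => x * (y * s)) '' S.carrier = (fun s => (x * y) * s) '' S.carrier := by
  refine ⟨S.image_eq_image_of_eq_or_eq_neg ?_ ?_ ?_ (Q.mul_comm_eq_or_eq_neg x),
    S.image_eq_image_of_eq_or_eq_neg ?_ ?_ ?_ (Q.mul_assoc_eq_or_eq_neg x · y),
    S.image_eq_image_of_eq_or_eq_neg ?_ ?_ ?_
      fun s => eq_or_eq_neg_comm.mp (Q.mul_assoc_eq_or_eq_neg x y s)⟩ <;> simp
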